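/- The connected component of the Kronecker product ℤ₊ ×_K ℤ₊ containing (0,0) is graph-isomorphic to the restricted lattice L{(x,y) ∈ ℤ² : x ≥ y ≥ -x}, with the origin mapped to the origin. -/

import Mathlib

def SimpleGraph.kron {V₁ V₂ : Type*} (G₁ : SimpleGraph V₁) (G₂ : SimpleGraph V₂) :
    SimpleGraph (V₁ × V₂) where
  Adj p q := G₁.Adj p.1 q.1 ∧ G₂.Adj p.2 q.2
  symm := ⟨fun _ _ h => ⟨h.1.symm, h.2.symm⟩⟩
  loopless := ⟨fun p h => h.1.ne rfl⟩

/-- The one-dimensional integer lattice: `x ∼ y` iff `|x - y| = 1`. -/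
def latZ : SimpleGraph ℤ where
  Adj x y := |x - y| = 1
  symm := ⟨by intro x y h; rwa [abs_sub_comm]⟩
  loopless := ⟨by intro x h; simp at h⟩

/-- The half-line graph on `ℕ = {0,1,2,...}`: `x ∼ y` iff `|x - y| = 1`. -/
def latN : SimpleGraph ℕ where
  Adj x y := |(x : ℤ) - y| = 1
  symm := ⟨by intro x y h; rwa [abs_sub_comm]⟩
  loopless := ⟨by intro x h; simp at h⟩

/-- The connected component of `G` containing `o`, as the induced subgraph on the
set of vertices reachable from `o`. -/
def component {V : Type*} (G : SimpleGraph V) (o : V) : SimpleGraph {v // G.Reachable o v} :=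
  G.induce {v | G.Reachable o v}

/-!
The component of `(0, 0)` in `ℕ ×_K ℕ` is the set of points with `u + v` even: every Kronecker step
changes both coordinates by one, and diagonal steps followed by zigzags
`(u, v) → (u + 1, v + 1) → (u + 2, v)` reach every such point. The coordinates
`(u, v) ↦ ((u + v) / 2, (u - v) / 2)` map this set onto the cone `-x ≤ y ≤ x`, and they form a graph
isomorphism because the inverse change `(x, y) ↦ (x + y, x - y)` turns the unit steps of `ℤ □ ℤ`
into the diagonal steps of `ℤ ×_K ℤ`.
-/

namespace SimpleGraph

variable {V W : Type*}

lemma kron_adj (G : SimpleGraph V) (H : SimpleGraph W) {p q : V × W} :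
    (G.kron H).Adj p q ↔ G.Adj p.1 q.1 ∧ H.Adj p.2 q.2 :=
  Iff.rfl

def kronSwap (G : SimpleGraph V) (H : SimpleGraph W) : G.kron H →g H.kron G where
  toFun := Prod.swap
  map_rel' h := ⟨h.2, h.1⟩

lemma Reachable.apply_eq_of_forall_adj {α : Type*} {G : SimpleGraph V} {f : V → α}
    (hf : ∀ a b, G.Adj a b → f a = f b) {u v : V} (h : G.Reachable u v) : f u = f v := by
  obtain ⟨w⟩ := h
  induction w with
  | nil => rfl
  | cons hadj _ ih => exact (hf _ _ hadj).trans ih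

end SimpleGraph

open SimpleGraph

lemma latZ_adj_iff {a b : ℤ} : latZ.Adj a b ↔ a = b + 1 ∨ b = a + 1 := by
  change |a - b| = 1 ↔ _
  rw [abs_eq zero_le_one]
  omega

lemma latN_adj_iff_latZ_adj {a b : ℕ} : latN.Adj a b ↔ latZ.Adj a b :=
  Iff.rfl

lemma latN_adj_iff {a b : ℕ} : latN.Adj a b ↔ a = b + 1 ∨ b = a + 1 := by
  rw [latN_adj_iff_latZ_adj, latZ_adj_iff]
  omega

lemma boxProd_latZ_adj_iff_kron {p q : ℤ × ℤ} :
    (latZ □ latZ).Adj p q ↔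
      (latZ.kron latZ).Adj (p.1 + p.2, p.1 - p.2) (q.1 + q.2, q.1 - q.2) := by
  simp only [boxProd_adj, kron_adj, latZ_adj_iff]
  omega

lemma kron_latN_reachable_diag (n : ℕ) : (latN.kron latN).Reachable (0, 0) (n, n) := by
  induction n with
  | zero => rfl
  | succ n ih => exact ih.trans (Adj.reachable (by simp [kron_adj, latN_adj_iff]))

lemma kron_latN_reachable_add_two_mul (u v k : ℕ) :
    (latN.kron latN).Reachable (u, v) (u + 2 * k, v) := by
  induction k with
  | zero => rfl
  | succ k ih =>
    have up : (latN.kron latN).Adj (u + 2 * k, v) (u + 2 * k + 1, v + 1) := by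
      simp [kron_adj, latN_adj_iff]
    have down : (latN.kron latN).Adj (u + 2 * k + 1, v + 1) (u + 2 * (k + 1), v) := by
      simp only [kron_adj, latN_adj_iff, true_or, and_true]
      omega
    exact ih.trans (up.reachable.trans down.reachable)

lemma kron_latN_reachable_zero_iff {p : ℕ × ℕ} :
    (latN.kron latN).Reachable (0, 0) p ↔ (p.1 + p.2) % 2 = 0 := by
  constructor
  · intro h
    refine (h.apply_eq_of_forall_adj (f := fun p : ℕ × ℕ => (p.1 + p.2) % 2) ?_).symm
    rintro a b ⟨h₁, h₂⟩
    rw [latN_adj_iff] at h₁ h₂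
    omega
  · obtain ⟨u, v⟩ := p
    intro h
    rcases le_total v u with hvu | huv
    · obtain ⟨k, rfl⟩ : ∃ k, u = v + 2 * k := ⟨(u - v) / 2, by omega⟩
      exact (kron_latN_reachable_diag v).trans (kron_latN_reachable_add_two_mul v v k)
    · obtain ⟨k, rfl⟩ : ∃ k, v = u + 2 * k := ⟨(v - u) / 2, by omega⟩
      exact ((kron_latN_reachable_diag u).trans
        (kron_latN_reachable_add_two_mul u u k)).map (kronSwap latN latN)

/-- The divisions by `2` are exact because `u + v` is even on the component. -/
def kronComponentEquivCone :
    {p : ℕ × ℕ // (latN.kron latN).Reachable (0, 0) p} ≃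
      {q : ℤ × ℤ // -q.1 ≤ q.2 ∧ q.2 ≤ q.1} where
  toFun p :=
    ⟨(((p.1.1 : ℤ) + p.1.2) / 2, ((p.1.1 : ℤ) - p.1.2) / 2), by
      have := kron_latN_reachable_zero_iff.mp p.2
      omega⟩
  invFun q :=
    ⟨((q.1.1 + q.1.2).toNat, (q.1.1 - q.1.2).toNat),
      kron_latN_reachable_zero_iff.mpr (by omega)⟩
  left_inv := by
    rintro ⟨⟨u, v⟩, hp⟩
    have := kron_latN_reachable_zero_iff.mp hp
    ext <;> dsimp only <;> omega
  right_inv := by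
    rintro ⟨⟨x, y⟩, hx, hy⟩
    ext <;> dsimp only <;> omega

lemma kronComponentEquivCone_rotate (p : {p : ℕ × ℕ // (latN.kron latN).Reachable (0, 0) p}) :
    let q := (kronComponentEquivCone p).1
    (q.1 + q.2, q.1 - q.2) = ((p.1.1 : ℤ), (p.1.2 : ℤ)) := by
  have := kron_latN_reachable_zero_iff.mp p.2
  ext <;> dsimp only [kronComponentEquivCone, Equiv.coe_fn_mk] <;> omega

theorem component_kronNN_iso_cone :
    ∃ φ : component (latN.kron latN) (0, 0) ≃g
        (latZ □ latZ).induce {p : ℤ × ℤ | -p.1 ≤ p.2 ∧ p.2 ≤ p.1},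
      φ ⟨(0, 0), SimpleGraph.Reachable.refl _⟩ = ⟨(0, 0), by simp⟩ := by
  refine ⟨⟨kronComponentEquivCone, fun {p q} => ?_⟩, rfl⟩
  change (latZ □ latZ).Adj (kronComponentEquivCone p).1 (kronComponentEquivCone q).1 ↔
    (latN.kron latN).Adj p.1 q.1
  rw [boxProd_latZ_adj_iff_kron, kronComponentEquivCone_rotate p, kronComponentEquivCone_rotate q]
  rfl
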